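/- Let n, m ≥ 1 and let A be a linear map on ℂ^{m(1+n)} = ℂ^m ⊕ ℂ^{mn} whose corner block A⊥⊥ is invertible. Then the corner block (A*)⊥⊥ = (A⊥⊥)* of the adjoint A* is invertible, and the transform of the adjoint satisfies (A*)^ = N (Â)* N, where N := [[−I, 0],[0, I]]. -/

import Mathlib

noncomputable section

open MeasureTheory Real ContinuousLinearMap

/-- The "normal" component space `ℂ^m`. -/
abbrev NormalSp (m : ℕ) := EuclideanSpace ℂ (Fin m)
/-- The "tangential" component space `ℂ^{mn} ≅ (ℂ^m)ⁿ`. -/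
abbrev TangSp (m n : ℕ) := EuclideanSpace ℂ (Fin m × Fin n)
/-- The full space `ℂ^{m(1+n)} = ℂ^m ⊕ ℂ^{mn}`. -/
abbrev FullSp (m n : ℕ) := EuclideanSpace ℂ (Fin m ⊕ Fin m × Fin n)
/-- `ℝⁿ` with the Euclidean structure. -/
abbrev Rn (n : ℕ) := EuclideanSpace ℝ (Fin n)

namespace LayerPotential

variable {m n : ℕ}

/-- Injection of the normal part `ℂ^m → ℂ^{m(1+n)}`, `a ↦ (a, 0)`. -/
def injN (m n : ℕ) : NormalSp m →L[ℂ] FullSp m n :=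
  LinearMap.toContinuousLinearMap
  { toFun := fun a => WithLp.toLp 2 (Sum.elim a 0 : Fin m ⊕ Fin m × Fin n → ℂ)
    map_add' := by
      intro a b; ext idx; rcases idx with i | p <;> simp
    map_smul' := by
      intro c a; ext idx; rcases idx with i | p <;> simp }

/-- Injection of the tangential part `ℂ^{mn} → ℂ^{m(1+n)}`, `b ↦ (0, b)`. -/
def injT (m n : ℕ) : TangSp m n →L[ℂ] FullSp m n :=
  LinearMap.toContinuousLinearMap
  { toFun := fun b => WithLp.toLp 2 (Sum.elim 0 b : Fin m ⊕ Fin m × Fin n → ℂ)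
    map_add' := by
      intro a b; ext idx; rcases idx with i | p <;> simp
    map_smul' := by
      intro c a; ext idx; rcases idx with i | p <;> simp }

/-- Projection onto the normal part `f ↦ f⊥`. -/
def projN (m n : ℕ) : FullSp m n →L[ℂ] NormalSp m :=
  LinearMap.toContinuousLinearMap
  { toFun := fun f => WithLp.toLp 2 (fun i => f (Sum.inl i) : Fin m → ℂ)
    map_add' := by intro a b; ext i; simp
    map_smul' := by intro c a; ext i; simp }

/-- Projection onto the tangential part `f ↦ f∥`. -/
def projT (m n : ℕ) : FullSp m n →L[ℂ] TangSp m n :=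
  LinearMap.toContinuousLinearMap
  { toFun := fun f => WithLp.toLp 2 (fun p => f (Sum.inr p) : Fin m × Fin n → ℂ)
    map_add' := by intro a b; ext p; simp
    map_smul' := by intro c a; ext p; simp }

/-- The corner block `A⊥⊥`. -/
def blockNN (A : FullSp m n →L[ℂ] FullSp m n) : NormalSp m →L[ℂ] NormalSp m :=
  projN m n ∘L A ∘L injN m n

/-- The block `A⊥∥`. -/
def blockNT (A : FullSp m n →L[ℂ] FullSp m n) : TangSp m n →L[ℂ] NormalSp m :=
  projN m n ∘L A ∘L injT m n

/-- The block `A∥⊥`. -/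
def blockTN (A : FullSp m n →L[ℂ] FullSp m n) : NormalSp m →L[ℂ] TangSp m n :=
  projT m n ∘L A ∘L injN m n

/-- The block `A∥∥`. -/
def blockTT (A : FullSp m n →L[ℂ] FullSp m n) : TangSp m n →L[ℂ] TangSp m n :=
  projT m n ∘L A ∘L injT m n

/-- The transformed matrix `Â`, defined using `Ring.inverse` of the corner block
(which is the honest inverse whenever `A⊥⊥` is invertible). -/
def hatT (A : FullSp m n →L[ℂ] FullSp m n) : FullSp m n →L[ℂ] FullSp m n :=
  injN m n ∘L ((Ring.inverse (blockNN A)) ∘L projN m n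
      - ((Ring.inverse (blockNN A)) ∘L blockNT A) ∘L projT m n)
  + injT m n ∘L ((blockTN A ∘L (Ring.inverse (blockNN A))) ∘L projN m n
      + (blockTT A - (blockTN A ∘L (Ring.inverse (blockNN A))) ∘L blockNT A) ∘L projT m n)

/-- The reflection `N(f⊥, f∥) = (−f⊥, f∥)`. -/
def reflN (m n : ℕ) : FullSp m n →L[ℂ] FullSp m n :=
  injT m n ∘L projT m n - injN m n ∘L projN m n



/-- The lower triangular factor `[[1,0],[−σ,I]] : (a,b) ↦ (a, b − a⊗σ)`. -/
def lowTri (m : ℕ) (σ : Fin n → ℝ) : FullSp m n →L[ℂ] FullSp m n :=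
  LinearMap.toContinuousLinearMap
  { toFun := fun f => WithLp.toLp 2 (Sum.elim (fun i => f (Sum.inl i))
      (fun p => f (Sum.inr p) - (σ p.2 : ℂ) * f (Sum.inl p.1)) :
        Fin m ⊕ Fin m × Fin n → ℂ)
    map_add' := by
      intro a b; ext idx; rcases idx with i | p <;> simp <;> ring
    map_smul' := by
      intro c a; ext idx; rcases idx with i | p <;> simp <;> ring }

/-- The upper triangular factor `[[1,−σᵗ],[0,I]] : (a,b) ↦ (a − Σ_k σ_k b_k, b)`. -/
def upTri (m : ℕ) (σ : Fin n → ℝ) : FullSp m n →L[ℂ] FullSp m n :=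
  LinearMap.toContinuousLinearMap
  { toFun := fun f => WithLp.toLp 2 (Sum.elim (fun i => f (Sum.inl i) - ∑ k, (σ k : ℂ) * f (Sum.inr (i, k)))
      (fun p => f (Sum.inr p)) : Fin m ⊕ Fin m × Fin n → ℂ)
    map_add' := by
      intro a b; ext idx; rcases idx with i | p <;>
        simp [Finset.sum_add_distrib, mul_add] <;> ring
    map_smul' := by
      intro c a; ext idx; rcases idx with i | p <;>
        simp [Finset.mul_sum, mul_assoc, mul_left_comm, mul_sub] }

/-- The transformed coefficients `A_σ := [[1,−σᵗ],[0,I]] · A · [[1,0],[−σ,I]]`. -/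
def coeffSigma (σ : Fin n → ℝ) (A : FullSp m n →L[ℂ] FullSp m n) :
    FullSp m n →L[ℂ] FullSp m n :=
  upTri m σ ∘L A ∘L lowTri m σ

/-- The map `g ↦ (ν₀ g⊥, g⊥ ⊗ ν)`. -/
def tensorMap (m : ℕ) (ν₀ : ℝ) (ν : Fin n → ℝ) : FullSp m n →L[ℂ] FullSp m n :=
  LinearMap.toContinuousLinearMap
  { toFun := fun g => WithLp.toLp 2 (Sum.elim (fun i => (ν₀ : ℂ) * g (Sum.inl i))
      (fun p => (ν p.2 : ℂ) * g (Sum.inl p.1)) : Fin m ⊕ Fin m × Fin n → ℂ)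
    map_add' := by
      intro a b; ext idx; rcases idx with i | p <;> simp <;> ring
    map_smul' := by
      intro c a; ext idx; rcases idx with i | p <;> simp <;> ring }

/-- The map `h ↦ (Σ_k ν_k h∥,k, −ν₀ h∥)`. -/
def contractMap (m : ℕ) (ν₀ : ℝ) (ν : Fin n → ℝ) : FullSp m n →L[ℂ] FullSp m n :=
  LinearMap.toContinuousLinearMap
  { toFun := fun h => WithLp.toLp 2 (Sum.elim (fun i => ∑ k, (ν k : ℂ) * h (Sum.inr (i, k)))
      (fun p => -(ν₀ : ℂ) * h (Sum.inr p)) : Fin m ⊕ Fin m × Fin n → ℂ)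
    map_add' := by
      intro a b; ext idx; rcases idx with i | p <;>
        simp [Finset.sum_add_distrib, mul_add] <;> ring
    map_smul' := by
      intro c a; ext idx; rcases idx with i | p <;>
        simp [Finset.mul_sum, mul_assoc, mul_left_comm, mul_sub] }

/-- The one-form coefficients `Λ_A(ν₀, ν)g := A(ν₀ g⊥, g⊥⊗ν) + (Σ_k ν_k (Ag)∥,k, −ν₀ (Ag)∥)`. -/
def lambdaForm (A : FullSp m n →L[ℂ] FullSp m n) (ν₀ : ℝ) (ν : Fin n → ℝ) :
    FullSp m n →L[ℂ] FullSp m n :=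
  A ∘L tensorMap m ν₀ ν + contractMap m ν₀ ν ∘L A

/-- Partial derivative `∂_k` of a scalar function on `ℝⁿ`. -/
def pd (k : Fin n) (g : Rn n → ℂ) (x : Rn n) : ℂ :=
  fderiv ℝ g x (EuclideanSpace.single k 1)

/-- The self-adjoint first order operator `D(g⊥, g∥) := (div g∥, −∇g⊥)` acting on
functions `ℝⁿ → ℂ^{m(1+n)}`. -/
def Dop (g : Rn n → FullSp m n) (x : Rn n) : FullSp m n :=
  WithLp.toLp 2 (Sum.elim (fun i => ∑ k, pd k (fun y => g y (Sum.inr (i, k))) x)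
    (fun p => - pd p.2 (fun y => g y (Sum.inl p.1)) x) : Fin m ⊕ Fin m × Fin n → ℂ)

/-- Partial derivative `∂_t` of a scalar function on `ℝ^{1+n} = ℝ × ℝⁿ`. -/
def pdt (F : ℝ × Rn n → ℂ) (q : ℝ × Rn n) : ℂ :=
  fderiv ℝ F q (1, 0)

/-- Partial derivative `∂_{x_k}` of a scalar function on `ℝ^{1+n} = ℝ × ℝⁿ`. -/
def pdx (k : Fin n) (F : ℝ × Rn n → ℂ) (q : ℝ × Rn n) : ℂ :=
  fderiv ℝ F q (0, EuclideanSpace.single k 1)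

/-- `∂_t` of a `ℂ^{m(1+n)}`-valued function, componentwise. -/
def pdtVec (F : ℝ × Rn n → FullSp m n) (q : ℝ × Rn n) : FullSp m n :=
  WithLp.toLp 2 (fun idx => pdt (fun r => F r idx) q : Fin m ⊕ Fin m × Fin n → ℂ)

/-- The full gradient `∇u = (∂_t u, ∇_x u)` of a `ℂ^m`-valued function on `ℝ^{1+n}`. -/
def fullGrad (u : ℝ × Rn n → NormalSp m) (q : ℝ × Rn n) : FullSp m n :=
  WithLp.toLp 2 (Sum.elim (fun i => pdt (fun r => u r i) q)
    (fun p => pdx p.2 (fun r => u r p.1) q) : Fin m ⊕ Fin m × Fin n → ℂ)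

/-- The divergence `div G = ∂_t G⊥ + Σ_k ∂_{x_k} G∥,k` of a `ℂ^{m(1+n)}`-valued field
on `ℝ^{1+n}`, valued in `ℂ^m`. -/
def divOp (G : ℝ × Rn n → FullSp m n) (q : ℝ × Rn n) : NormalSp m :=
  WithLp.toLp 2 (fun i => pdt (fun r => G r (Sum.inl i)) q
    + ∑ k, pdx k (fun r => G r (Sum.inr (i, k))) q : Fin m → ℂ)

/-- `u` is a weak (here: classical) solution of `div A∇u = 0` on `Ω`,
for `t`-independent coefficients `A`. -/
def SolvesDiv (A : Rn n → FullSp m n →L[ℂ] FullSp m n) (u : ℝ × Rn n → NormalSp m)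
    (Ω : Set (ℝ × Rn n)) : Prop :=
  ∀ q ∈ Ω, divOp (fun r => A r.2 (fullGrad u r)) q = 0

/-- The conormal gradient `∇_A u = ((A∇u)⊥, ∇_x u)`. -/
def conormalGrad (A : Rn n → FullSp m n →L[ℂ] FullSp m n) (u : ℝ × Rn n → NormalSp m)
    (q : ℝ × Rn n) : FullSp m n :=
  WithLp.toLp 2 (Sum.elim (fun i => (A q.2 (fullGrad u q)) (Sum.inl i))
    (fun p => pdx p.2 (fun r => u r p.1) q) : Fin m ⊕ Fin m × Fin n → ℂ)



/-!
Write `Â` as the block operator `[[B⁻¹, -B⁻¹C], [DB⁻¹, E - DB⁻¹C]]` in the blocks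
`B, C, D, E` of `A`. Taking adjoints transposes and stars the blocks, the blocks of `A*` are
`B*, D*, C*, E*`, and `(B*)⁻¹ = (B⁻¹)*`; so `(A*)^` and `(Â)*` agree except for the sign of
the off-diagonal blocks, which is exactly what conjugation by `N` changes.
-/

@[simp] lemma projN_injN_apply (a : NormalSp m) : projN m n (injN m n a) = a := rfl
@[simp] lemma projT_injT_apply (b : TangSp m n) : projT m n (injT m n b) = b := rfl
@[simp] lemma projN_injT_apply (b : TangSp m n) : projN m n (injT m n b) = 0 := rfl
@[simp] lemma projT_injN_apply (a : NormalSp m) : projT m n (injN m n a) = 0 := rfl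

lemma adjoint_injN : adjoint (injN m n) = projN m n := by
  refine ((eq_adjoint_iff _ _).mpr fun f a => ?_).symm
  simp [PiLp.inner_apply, Fintype.sum_sum_type, projN, injN]

lemma adjoint_injT : adjoint (injT m n) = projT m n := by
  refine ((eq_adjoint_iff _ _).mpr fun f b => ?_).symm
  simp [PiLp.inner_apply, Fintype.sum_sum_type, projT, injT]

lemma adjoint_projN : adjoint (projN m n) = injN m n := by
  rw [← adjoint_injN, adjoint_adjoint]

lemma adjoint_projT : adjoint (projT m n) = injT m n := by
  rw [← adjoint_injT, adjoint_adjoint]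

lemma blockNN_adjoint (A : FullSp m n →L[ℂ] FullSp m n) :
    blockNN (adjoint A) = adjoint (blockNN A) := by
  simp only [blockNN, adjoint_comp, adjoint_injN, adjoint_projN, comp_assoc]

lemma blockNT_adjoint (A : FullSp m n →L[ℂ] FullSp m n) :
    blockNT (adjoint A) = adjoint (blockTN A) := by
  simp only [blockNT, blockTN, adjoint_comp, adjoint_injN, adjoint_projT, comp_assoc]

lemma blockTN_adjoint (A : FullSp m n →L[ℂ] FullSp m n) :
    blockTN (adjoint A) = adjoint (blockNT A) := by
  simp only [blockTN, blockNT, adjoint_comp, adjoint_injT, adjoint_projN, comp_assoc]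

lemma blockTT_adjoint (A : FullSp m n →L[ℂ] FullSp m n) :
    blockTT (adjoint A) = adjoint (blockTT A) := by
  simp only [blockTT, adjoint_comp, adjoint_injT, adjoint_projT, comp_assoc]

lemma inverse_blockNN_adjoint (A : FullSp m n →L[ℂ] FullSp m n) :
    Ring.inverse (blockNN (adjoint A)) = adjoint (Ring.inverse (blockNN A)) := by
  rw [blockNN_adjoint, ← star_eq_adjoint, ← star_eq_adjoint]
  exact Ring.inverse_star _

def fromBlocks (P : NormalSp m →L[ℂ] NormalSp m) (Q : TangSp m n →L[ℂ] NormalSp m)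
    (R : NormalSp m →L[ℂ] TangSp m n) (S : TangSp m n →L[ℂ] TangSp m n) :
    FullSp m n →L[ℂ] FullSp m n :=
  injN m n ∘L (P ∘L projN m n + Q ∘L projT m n)
    + injT m n ∘L (R ∘L projN m n + S ∘L projT m n)

lemma adjoint_fromBlocks (P : NormalSp m →L[ℂ] NormalSp m) (Q : TangSp m n →L[ℂ] NormalSp m)
    (R : NormalSp m →L[ℂ] TangSp m n) (S : TangSp m n →L[ℂ] TangSp m n) :
    adjoint (fromBlocks P Q R S) =
      fromBlocks (adjoint P) (adjoint R) (adjoint Q) (adjoint S) := by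
  simp only [fromBlocks, map_add, adjoint_comp, adjoint_injN, adjoint_injT, adjoint_projN,
    adjoint_projT, comp_add, comp_assoc]
  abel

lemma reflN_comp_fromBlocks_comp_reflN (P : NormalSp m →L[ℂ] NormalSp m)
    (Q : TangSp m n →L[ℂ] NormalSp m) (R : NormalSp m →L[ℂ] TangSp m n)
    (S : TangSp m n →L[ℂ] TangSp m n) :
    reflN m n ∘L fromBlocks P Q R S ∘L reflN m n = fromBlocks P (-Q) (-R) S := by
  ext f : 1
  simp [fromBlocks, reflN]
  abel

lemma hatT_eq_fromBlocks (A : FullSp m n →L[ℂ] FullSp m n) :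
    hatT A = fromBlocks (Ring.inverse (blockNN A)) (-(Ring.inverse (blockNN A) ∘L blockNT A))
      (blockTN A ∘L Ring.inverse (blockNN A))
      (blockTT A - blockTN A ∘L Ring.inverse (blockNN A) ∘L blockNT A) := by
  simp only [hatT, fromBlocks, sub_eq_add_neg, neg_comp, comp_assoc]

theorem statement3_general (m n : ℕ)
    (A : FullSp m n →L[ℂ] FullSp m n) (hinv : IsUnit (blockNN A)) :
    blockNN (ContinuousLinearMap.adjoint A) = ContinuousLinearMap.adjoint (blockNN A) ∧
    IsUnit (blockNN (ContinuousLinearMap.adjoint A)) ∧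
    hatT (ContinuousLinearMap.adjoint A)
      = reflN m n ∘L ContinuousLinearMap.adjoint (hatT A) ∘L reflN m n := by
  refine ⟨blockNN_adjoint A, ?_, ?_⟩
  · rw [blockNN_adjoint, ← star_eq_adjoint]
    exact hinv.star
  · rw [hatT_eq_fromBlocks, hatT_eq_fromBlocks, adjoint_fromBlocks,
      reflN_comp_fromBlocks_comp_reflN, inverse_blockNN_adjoint, blockNT_adjoint,
      blockTN_adjoint, blockTT_adjoint]
    simp only [map_neg, map_sub, adjoint_comp, neg_neg, comp_assoc]

/-- the corner block of the adjoint is the adjoint of the corner block,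
it is invertible, and `(A*)^ = N (Â)* N`. -/
theorem statement3 (m n : ℕ) (hm : 1 ≤ m) (hn : 1 ≤ n)
    (A : FullSp m n →L[ℂ] FullSp m n) (hinv : IsUnit (blockNN A)) :
    blockNN (ContinuousLinearMap.adjoint A) = ContinuousLinearMap.adjoint (blockNN A) ∧
    IsUnit (blockNN (ContinuousLinearMap.adjoint A)) ∧
    hatT (ContinuousLinearMap.adjoint A)
      = reflN m n ∘L ContinuousLinearMap.adjoint (hatT A) ∘L reflN m n :=
  statement3_general m n A hinv

end LayerPotential
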